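/- Let ν ∈ M with Fourier coefficients c_k = c_k(ν), k = 0,1,2,…, and let δ be a weakly continuous metric on M. Then ρ_δ(F_{c_{0:n}}) → 0 as n → ∞. -/

import Mathlib

open MeasureTheory Complex Filter Topology
open scoped ENNReal

noncomputable section

instance : Fact (0 < 2 * Real.pi) := ⟨by positivity⟩

/-- The unit circle `𝕋`, identified with `(−π,π]`, formalized as `ℝ / 2πℤ`. -/
abbrev UnitCirc : Type := AddCircle (2 * Real.pi)

/-- `M`: the space of finite nonnegative Borel measures on `𝕋`, equipped with
the topology of weak convergence. -/
abbrev MSp : Type := MeasureTheory.FiniteMeasure UnitCirc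

/-- The `k`-th Fourier coefficient (covariance) `c_k(μ) = (1/2π) ∫ e^{−ikθ} dμ(θ)`. -/
def covCoeff (μ : MSp) (k : ℕ) : ℂ :=
  ((2 * Real.pi : ℝ) : ℂ)⁻¹ * ∫ θ, fourier (-(k : ℤ)) θ ∂(μ : Measure UnitCirc)

/-- The uncertainty set `F_{c_{0:n}}` (exact covariance matching). -/
def Fset (n : ℕ) (c : ℕ → ℂ) : Set MSp :=
  {μ | ∀ k ≤ n, covCoeff μ k = c k}

/-- The diameter `ρ_δ(F)` of a set of measures, valued in `[0,∞]`. -/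
def diamE (δ : MSp → MSp → ℝ) (F : Set MSp) : ℝ≥0∞ :=
  ⨆ μ0 ∈ F, ⨆ μ1 ∈ F, ENNReal.ofReal (δ μ0 μ1)

/-! The sets `F_{c_{0:n}}` shrink to `ν` in the weak topology. A measure in
`F_{c_{0:n}}` has the mass of `ν` and integrates every trigonometric polynomial of degree at
most `n` as `ν` does; trigonometric polynomials are uniformly dense in `C(𝕋)`, so the integral
of any continuous function against `μ ∈ F_{c_{0:n}}` is uniformly close to its integral against
`ν` for large `n`. Continuity of `δ` at `(ν, ν)`, where it vanishes, then makes the diameters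
tend to `0`. -/

open Set Submodule ComplexConjugate
open scoped BoundedContinuousFunction

theorem integral_fourier_neg {T : ℝ} (μ : Measure (AddCircle T)) (n : ℤ) :
    ∫ θ, fourier (-n) θ ∂μ = conj (∫ θ, fourier n θ ∂μ) := by
  simp_rw [fourier_neg]
  exact integral_conj

section CompactSpace

variable {X E : Type*} [TopologicalSpace X] [CompactSpace X] [MeasurableSpace X]
  [OpensMeasurableSpace X] [NormedAddCommGroup E] (μ : Measure X) [IsFiniteMeasure μ]

theorem ContinuousMap.integrable_of_compactSpace (f : C(X, E)) : Integrable f μ :=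
  f.continuous.integrable_of_hasCompactSupport (HasCompactSupport.of_compactSpace _)

theorem ContinuousMap.norm_integral_sub_le_dist_mul [NormedSpace ℝ E] (f g : C(X, E)) :
    ‖∫ x, f x ∂μ - ∫ x, g x ∂μ‖ ≤ dist f g * μ.real univ := by
  rw [← integral_sub (f.integrable_of_compactSpace μ) (g.integrable_of_compactSpace μ)]
  refine norm_integral_le_of_norm_le_const (Eventually.of_forall fun x => ?_)
  rw [← dist_eq_norm]
  exact ContinuousMap.dist_apply_le_dist x

end CompactSpace

theorem antitone_Fset (c : ℕ → ℂ) : Antitone (Fset · c) :=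
  fun _ _ hmn _ hμ k hk => hμ k (hk.trans hmn)

theorem integral_fourier_eq_of_mem_Fset {ν μ : MSp} {n : ℕ} (h : μ ∈ Fset n (covCoeff ν))
    {i : ℤ} (hi : i.natAbs ≤ n) :
    ∫ θ, fourier i θ ∂(μ : Measure UnitCirc) = ∫ θ, fourier i θ ∂(ν : Measure UnitCirc) := by
  have hneg : ∫ θ, fourier (-(i.natAbs : ℤ)) θ ∂(μ : Measure UnitCirc)
      = ∫ θ, fourier (-(i.natAbs : ℤ)) θ ∂(ν : Measure UnitCirc) :=
    mul_left_cancel₀ (by simp [Real.pi_ne_zero]) (h _ hi)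
  rcases Int.natAbs_eq i with hi' | hi'
  · have hconj := congrArg conj hneg
    rwa [← integral_fourier_neg, ← integral_fourier_neg, neg_neg, ← hi'] at hconj
  · rwa [← hi'] at hneg

theorem measureReal_univ_eq_of_mem_Fset {ν μ : MSp} {n : ℕ} (h : μ ∈ Fset n (covCoeff ν)) :
    (μ : Measure UnitCirc).real univ = (ν : Measure UnitCirc).real univ := by
  have h0 := integral_fourier_eq_of_mem_Fset h (i := 0) (by simp)
  simp only [fourier_zero, integral_const, Complex.real_smul, mul_one] at h0
  exact_mod_cast h0

theorem eventually_forall_mem_Fset_integral_eq (ν : MSp) {P : C(UnitCirc, ℂ)}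
    (hP : P ∈ span ℂ (range (@fourier (2 * Real.pi)))) :
    ∀ᶠ n in atTop, ∀ μ ∈ Fset n (covCoeff ν),
      ∫ θ, P θ ∂(μ : Measure UnitCirc) = ∫ θ, P θ ∂(ν : Measure UnitCirc) := by
  induction hP using span_induction with
  | mem _ hP =>
    obtain ⟨i, rfl⟩ := hP
    filter_upwards [eventually_ge_atTop i.natAbs] with n hn μ hμ
    exact integral_fourier_eq_of_mem_Fset hμ hn
  | zero => simp
  | add P Q _ _ hP hQ =>
    filter_upwards [hP, hQ] with n hPn hQn μ hμ
    simp only [ContinuousMap.add_apply]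
    rw [integral_add (P.integrable_of_compactSpace _) (Q.integrable_of_compactSpace _),
      integral_add (P.integrable_of_compactSpace _) (Q.integrable_of_compactSpace _),
      hPn μ hμ, hQn μ hμ]
  | smul a P _ hP =>
    filter_upwards [hP] with n hPn μ hμ
    simp only [ContinuousMap.smul_apply, smul_eq_mul, integral_const_mul, hPn μ hμ]

theorem eventually_forall_mem_Fset_dist_integral_lt (ν : MSp) (f : UnitCirc →ᵇ ℝ) {ε : ℝ}
    (hε : 0 < ε) :
    ∀ᶠ n in atTop, ∀ μ ∈ Fset n (covCoeff ν),
      dist (∫ θ, f θ ∂(μ : Measure UnitCirc)) (∫ θ, f θ ∂(ν : Measure UnitCirc)) < ε := by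
  set m := (ν : Measure UnitCirc).real univ
  let g : C(UnitCirc, ℂ) := ⟨fun θ => (f θ : ℂ), by fun_prop⟩
  have hg : g ∈ closure (span ℂ (range (@fourier (2 * Real.pi))) : Set C(UnitCirc, ℂ)) := by
    rw [← topologicalClosure_coe, span_fourier_closure_eq_top]
    trivial
  obtain ⟨P, hP, hgP⟩ := Metric.mem_closure_iff.1 hg (ε / (2 * (m + 1))) (by positivity)
  filter_upwards [eventually_forall_mem_Fset_integral_eq ν hP] with n hn μ hμ
  have hgP' : dist g P * (2 * (m + 1)) < ε := (lt_div_iff₀ (by positivity)).1 hgP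
  have hm : 0 ≤ m := measureReal_nonneg
  calc dist (∫ θ, f θ ∂(μ : Measure UnitCirc)) (∫ θ, f θ ∂(ν : Measure UnitCirc))
      = ‖(∫ θ, g θ ∂(μ : Measure UnitCirc) - ∫ θ, P θ ∂(μ : Measure UnitCirc))
          - (∫ θ, g θ ∂(ν : Measure UnitCirc) - ∫ θ, P θ ∂(ν : Measure UnitCirc))‖ := by
        rw [hn μ hμ, sub_sub_sub_cancel_right, Real.dist_eq, ← Real.norm_eq_abs,
          ← Complex.norm_real]
        simp only [g, ContinuousMap.coe_mk, Complex.ofReal_sub, integral_complex_ofReal]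
    _ ≤ dist g P * m + dist g P * m := by
        refine (norm_sub_le _ _).trans (add_le_add ?_ ?_)
        · have hμP := g.norm_integral_sub_le_dist_mul (μ : Measure UnitCirc) P
          rwa [measureReal_univ_eq_of_mem_Fset hμ] at hμP
        · exact g.norm_integral_sub_le_dist_mul _ P
    _ < ε := by nlinarith [dist_nonneg (x := g) (y := P)]

theorem tendsto_Fset_smallSets (ν : MSp) :
    Tendsto (Fset · (covCoeff ν)) atTop (𝓝 ν).smallSets := by
  let l := ⨅ n, 𝓟 (Fset n (covCoeff ν))
  have hl : l.HasAntitoneBasis (Fset · (covCoeff ν)) :=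
    ⟨hasBasis_iInf_principal (antitone_Fset _).directed_ge, antitone_Fset _⟩
  have hlν : Tendsto id l (𝓝 ν) := by
    refine FiniteMeasure.tendsto_iff_forall_integral_tendsto.2 fun f => ?_
    refine Metric.tendsto_nhds.2 fun ε hε => ?_
    obtain ⟨n, hn⟩ := (eventually_forall_mem_Fset_dist_integral_lt ν f hε).exists
    exact mem_iInf_of_mem n (mem_principal.2 hn)
  exact hl.tendsto_smallSets.mono_right (monotone_smallSets hlν)

theorem tendsto_diamE_zero {ι : Type*} {l : Filter ι} {δ : MSp → MSp → ℝ} {ν : MSp}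
    (hcont : Continuous fun p : MSp × MSp => δ p.1 p.2) (hν : δ ν ν = 0)
    {F : ι → Set MSp} (hF : Tendsto F l (𝓝 ν).smallSets) :
    Tendsto (fun i => diamE δ (F i)) l (𝓝 0) := by
  refine ENNReal.tendsto_nhds_zero.2 fun ε hε => ?_
  have hδ : Tendsto (fun p : MSp × MSp => ENNReal.ofReal (δ p.1 p.2)) (𝓝 (ν, ν)) (𝓝 0) := by
    simpa [hν, Function.comp_def] using (ENNReal.continuous_ofReal.comp hcont).tendsto (ν, ν)
  have hV := hδ.eventually (ge_mem_nhds hε)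
  rw [nhds_prod_eq] at hV
  obtain ⟨U, hU, hUV⟩ := mem_prod_self_iff.1 hV
  filter_upwards [tendsto_smallSets_iff.1 hF U hU] with i hi
  exact iSup₂_le fun μ0 h0 => iSup₂_le fun μ1 h1 => hUV (mk_mem_prod (hi h0) (hi h1))

theorem stmt1_general (ν : MSp) (δ : MSp → MSp → ℝ)
    (hm₀ : ∀ μ0 μ1 : MSp, δ μ0 μ1 = 0 ↔ μ0 = μ1)
    (hcont : Continuous (fun p : MSp × MSp => δ p.1 p.2)) :
    Tendsto (fun n => diamE δ (Fset n (covCoeff ν))) atTop (nhds 0) :=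
  tendsto_diamE_zero hcont ((hm₀ ν ν).2 rfl) (tendsto_Fset_smallSets ν)

/-- If `δ` is a weakly continuous metric on `M` and `c_k = c_k(ν)`,
then `ρ_δ(F_{c_{0:n}}) → 0` as `n → ∞`. -/
theorem stmt1 (ν : MSp) (δ : MSp → MSp → ℝ)
    (hm₀ : ∀ μ0 μ1 : MSp, δ μ0 μ1 = 0 ↔ μ0 = μ1)
    (hm₁ : ∀ μ0 μ1 : MSp, δ μ0 μ1 = δ μ1 μ0)
    (hm₂ : ∀ μ0 μ1 μ2 : MSp, δ μ0 μ2 ≤ δ μ0 μ1 + δ μ1 μ2)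
    (hcont : Continuous (fun p : MSp × MSp => δ p.1 p.2)) :
    Tendsto (fun n => diamE δ (Fset n (covCoeff ν))) atTop (nhds 0) :=
  stmt1_general ν δ hm₀ hcont

end
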